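/- Let p be a prime, let G = Z_{p²}, let S be a proper subset of G∖{0} that generates G, and let C ⊆ G with 0 ∈ C. Then C is a perfect code in Cay(G,S) if and only if S₀ = {i + α_i·p : i ∈ [p]} (computed modulo p²) for some integers α_i (i ∈ [p]) with α_0 = 0, and C = {i·p : i ∈ [p]}, the subgroup pZ_{p²}. -/

import Mathlib

open Pointwise

/-- `G = A ⊕ B`: every element of `G` can be written uniquely as `a + b`
with `a ∈ A` and `b ∈ B`. -/
def IsFactorization {G : Type*} [AddCommGroup G] (A B : Set G) : Prop :=
  ∀ g : G, ∃! ab : G × G, ab.1 ∈ A ∧ ab.2 ∈ B ∧ ab.1 + ab.2 = g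

/-- The subgroup of periods `L_A = {g : g + A = A}` of a subset `A`. -/
def periods {G : Type*} [AddCommGroup G] (A : Set G) : AddSubgroup G :=
  AddAction.stabilizer G A

/-- A subset is periodic if it has a non-zero period. -/
def IsPeriodic {G : Type*} [AddCommGroup G] (A : Set G) : Prop :=
  periods A ≠ ⊥

/-- A Hajós group: a (finite abelian) group in which, for every factorization,
at least one factor is periodic. -/
def IsHajos (G : Type*) [AddCommGroup G] : Prop :=
  ∀ A B : Set G, IsFactorization A B → IsPeriodic A ∨ IsPeriodic B

/-- `C` is a perfect code in the Cayley graph `Cay(G,S)`: every element of `G`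
can be written uniquely as `s + c` with `s ∈ S₀ = S ∪ {0}` and `c ∈ C`. -/
def IsPerfectCode {G : Type*} [AddCommGroup G] (S C : Set G) : Prop :=
  IsFactorization (insert 0 S) C

/-- `A = X ⊕ Y` for subsets: `X + Y = A` and representations are unique. -/
def IsSubsetDirectSum {G : Type*} [AddCommGroup G] (X Y A : Set G) : Prop :=
  X + Y = A ∧
    ∀ x₁ ∈ X, ∀ y₁ ∈ Y, ∀ x₂ ∈ X, ∀ y₂ ∈ Y,
      x₁ + y₁ = x₂ + y₂ → x₁ = x₂ ∧ y₁ = y₂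

/-!
A perfect code `C` makes `Z_{p²} = S₀ ⊕ C` a factorization, so `|S₀| |C| = p²`, and summing an
additive character `a ↦ ζ^a` (`ζ` a primitive `p²`-th root of unity) over both sides gives
`S₀(ζ) C(ζ) = 0`, where `A(ζ) = ∑_{a ∈ A} ζ^a`. Since `1 < |S₀| < p²`, both factors have `p`
elements. If a `p`-element set `A ∋ 0` has `A(ζ) = 0`, then `Φ_{p²} = ∑_{i<p} X^{ip}` divides the
mask polynomial `∑_{a ∈ A} X^a`, whose coefficients are therefore `p`-periodic; hence `A = pZ_{p²}`.
As `S` generates, `S₀ ≠ pZ_{p²}`, so `C = pZ_{p²}`, and `S₀ ⊕ pZ_{p²} = Z_{p²}` says exactly that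
`S₀` is a transversal of `pZ_{p²}`, i.e. `S₀ = {i + α_i p : i ∈ [p]}`.
-/

namespace IsFactorization

variable {G : Type*} [AddCommGroup G] {A B : Set G}

theorem eq_of_add_eq (h : IsFactorization A B) {a a' b b' : G} (ha : a ∈ A) (hb : b ∈ B)
    (ha' : a' ∈ A) (hb' : b' ∈ B) (heq : a + b = a' + b') : a = a' ∧ b = b' := by
  obtain ⟨_, -, huniq⟩ := h (a + b)
  have := (huniq (a, b) ⟨ha, hb, rfl⟩).trans (huniq (a', b') ⟨ha', hb', heq.symm⟩).symm
  exact Prod.ext_iff.mp this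

noncomputable def equivProd (h : IsFactorization A B) : A × B ≃ G :=
  Equiv.ofBijective (fun x => x.1 + x.2)
    ⟨fun x y hxy => by
      obtain ⟨h₁, h₂⟩ := h.eq_of_add_eq x.1.2 x.2.2 y.1.2 y.2.2 hxy
      exact Prod.ext (Subtype.ext h₁) (Subtype.ext h₂),
    fun g => by
      obtain ⟨⟨a, b⟩, ⟨ha, hb, hab⟩, -⟩ := h g
      exact ⟨(⟨a, ha⟩, ⟨b, hb⟩), hab⟩⟩

theorem ncard_mul_ncard [Finite G] (h : IsFactorization A B) :
    A.ncard * B.ncard = Nat.card G := by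
  rw [← Nat.card_coe_set_eq, ← Nat.card_coe_set_eq, ← Nat.card_prod, Nat.card_congr h.equivProd]

theorem sum_mul_sum [Fintype G] [Fintype A] [Fintype B] {R : Type*} [CommRing R]
    (h : IsFactorization A B) (ψ : AddChar G R) :
    (∑ a ∈ A.toFinset, ψ a) * (∑ b ∈ B.toFinset, ψ b) = ∑ g, ψ g := by
  rw [← Finset.sum_set_coe, ← Finset.sum_set_coe, Fintype.sum_mul_sum, ← Fintype.sum_prod_type',
    ← h.equivProd.sum_comp]
  exact Fintype.sum_congr _ _ fun x => (AddChar.map_add_eq_mul ψ x.1 x.2).symm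

end IsFactorization

theorem isFactorization_ker_iff_bijOn {G H : Type*} [AddCommGroup G] [AddCommGroup H]
    {π : G →+ H} (hπ : Function.Surjective π) {A : Set G} :
    IsFactorization A π.ker ↔ Set.BijOn π A Set.univ := by
  constructor
  · intro h
    refine ⟨Set.mapsTo_univ _ _, fun a ha a' ha' heq => ?_, fun y _ => ?_⟩
    · have hk : a - a' ∈ π.ker := by simp [heq]
      exact (h.eq_of_add_eq ha π.ker.zero_mem ha' hk (by abel)).1
    · obtain ⟨g, rfl⟩ := hπ y
      obtain ⟨⟨a, k⟩, ⟨ha, hk, rfl⟩, -⟩ := h g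
      exact ⟨a, ha, by simp_all⟩
  · intro h g
    obtain ⟨a, ha, hag⟩ := h.surjOn (Set.mem_univ (π g))
    refine ⟨(a, g - a), ⟨ha, by simp [hag], add_sub_cancel a g⟩, ?_⟩
    rintro ⟨a', k⟩ ⟨ha', hk, rfl⟩
    obtain rfl : a' = a := h.injOn ha' ha (by simpa [AddMonoidHom.mem_ker.1 hk] using hag.symm)
    simp

open Polynomial

theorem Polynomial.coeff_add_prime_pow_of_cyclotomic_dvd {R : Type*} [CommRing R] [Nontrivial R]
    {p k : ℕ} [hp : Fact p.Prime] {f : R[X]} (hdvd : cyclotomic (p ^ (k + 1)) R ∣ f)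
    (hdeg : f.natDegree < p ^ (k + 1)) {t : ℕ} (ht : t + p ^ k < p ^ (k + 1)) :
    f.coeff (t + p ^ k) = f.coeff t := by
  obtain ⟨Q, rfl⟩ := hdvd
  rcases eq_or_ne Q 0 with rfl | hQ
  · simp
  have hQdeg : Q.natDegree < p ^ k := by
    rw [(cyclotomic.monic _ R).natDegree_mul' hQ, natDegree_cyclotomic,
      Nat.totient_prime_pow_succ hp.out, Nat.mul_sub_one] at hdeg
    have := Nat.le_mul_of_pos_right (p ^ k) hp.out.pos
    rw [pow_succ] at hdeg
    omega
  have key : cyclotomic (p ^ (k + 1)) R * Q * X ^ p ^ k - cyclotomic (p ^ (k + 1)) R * Q =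
      Q * X ^ p ^ (k + 1) - Q := by
    rw [← mul_sub_one, mul_right_comm, cyclotomic_prime_pow_mul_X_pow_sub_one, sub_one_mul,
      mul_comm]
  have := congrArg (coeff · (t + p ^ k)) key
  rw [coeff_sub, coeff_mul_X_pow, coeff_sub, coeff_mul_X_pow', if_neg (not_le.2 ht),
    coeff_eq_zero_of_natDegree_lt (hQdeg.trans_le (Nat.le_add_left _ t)), sub_zero] at this
  exact (sub_eq_zero.1 this).symm

theorem Polynomial.coeff_mul_prime_pow_of_cyclotomic_dvd {R : Type*} [CommRing R] [Nontrivial R]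
    {p k : ℕ} [hp : Fact p.Prime] {f : R[X]} (hdvd : cyclotomic (p ^ (k + 1)) R ∣ f)
    (hdeg : f.natDegree < p ^ (k + 1)) {j : ℕ} (hj : j < p) :
    f.coeff (j * p ^ k) = f.coeff 0 := by
  induction j with
  | zero => simp
  | succ j ih =>
    have hlt : (j + 1) * p ^ k < p ^ (k + 1) := by
      rw [pow_succ, mul_comm]; exact Nat.mul_lt_mul_of_pos_left hj (pow_pos hp.out.pos k)
    rw [add_one_mul, coeff_add_prime_pow_of_cyclotomic_dvd hdvd hdeg (by rwa [← add_one_mul]),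
      ih (by omega)]

section MaskPolynomial

variable {n : ℕ}

noncomputable def maskPolynomial (A : Finset (ZMod n)) : ℚ[X] :=
  ∑ a ∈ A, X ^ a.val

theorem coeff_maskPolynomial (A : Finset (ZMod n)) {m : ℕ} (hm : m < n) :
    (maskPolynomial A).coeff m = if (m : ZMod n) ∈ A then 1 else 0 := by
  have : NeZero n := NeZero.of_pos (by omega)
  have hval : ∀ a : ZMod n, m = a.val ↔ a = m := fun a => by
    constructor
    · rintro rfl; exact (ZMod.natCast_zmod_val a).symm
    · rintro rfl; exact (ZMod.val_cast_of_lt hm).symm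
  simp only [maskPolynomial, finsetSum_coeff, coeff_X_pow, hval, Finset.sum_ite_eq']

theorem natDegree_maskPolynomial_lt [NeZero n] (A : Finset (ZMod n)) :
    (maskPolynomial A).natDegree < n :=
  Nat.lt_of_le_pred (NeZero.pos n) <| natDegree_sum_le_of_forall_le _ _ fun a _ => by
    rw [natDegree_X_pow]; exact Nat.le_pred_of_lt a.val_lt

theorem cyclotomic_dvd_maskPolynomial [NeZero n] {A : Finset (ZMod n)} {ζ : ℂ}
    (hζ : IsPrimitiveRoot ζ n) (hsum : ∑ a ∈ A, ζ ^ a.val = 0) :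
    cyclotomic n ℚ ∣ maskPolynomial A := by
  rw [cyclotomic_eq_minpoly_rat hζ (NeZero.pos n)]
  exact minpoly.dvd ℚ ζ (by simpa [maskPolynomial] using hsum)

end MaskPolynomial

theorem natCast_mul_prime_pow_mem_of_sum_eq_zero {p k : ℕ} [hp : Fact p.Prime]
    {A : Finset (ZMod (p ^ (k + 1)))} {ζ : ℂ} (hζ : IsPrimitiveRoot ζ (p ^ (k + 1)))
    (h0 : 0 ∈ A) (hsum : ∑ a ∈ A, ζ ^ a.val = 0) {j : ℕ} (hj : j < p) :
    ((j * p ^ k : ℕ) : ZMod (p ^ (k + 1))) ∈ A := by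
  have hlt : j * p ^ k < p ^ (k + 1) := by
    rw [pow_succ, mul_comm]; exact Nat.mul_lt_mul_of_pos_left hj (pow_pos hp.out.pos k)
  have hcoeff := coeff_mul_prime_pow_of_cyclotomic_dvd (cyclotomic_dvd_maskPolynomial hζ hsum)
    (natDegree_maskPolynomial_lt A) hj
  rw [coeff_maskPolynomial A hlt, coeff_maskPolynomial A (pow_pos hp.out.pos _)] at hcoeff
  simpa [h0] using hcoeff

theorem Nat.Prime.eq_of_dvd_sq {p d : ℕ} (hp : p.Prime) (hd : d ∣ p ^ 2) (h1 : 1 < d)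
    (h2 : d < p ^ 2) : d = p := by
  obtain ⟨m, hm, rfl⟩ := (Nat.dvd_prime_pow hp).1 hd
  interval_cases m <;> simp_all

section PrimeSquare

variable {p : ℕ}

abbrev reduceSq (p : ℕ) : ZMod (p ^ 2) →+* ZMod p :=
  ZMod.castHom (dvd_pow_self p two_ne_zero) (ZMod p)

def primeMultiples (p : ℕ) : Set (ZMod (p ^ 2)) :=
  {x | ∃ i < p, x = (i : ZMod (p ^ 2)) * (p : ZMod (p ^ 2))}

theorem reduceSq_eq_zero_iff [NeZero p] {x : ZMod (p ^ 2)} : reduceSq p x = 0 ↔ p ∣ x.val := by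
  rw [ZMod.castHom_apply, ZMod.cast_eq_val, ZMod.natCast_eq_zero_iff]

theorem reduceSq_natCast_add_mul (i : ℕ) (a : ℤ) :
    reduceSq p ((i : ZMod (p ^ 2)) + (a : ZMod (p ^ 2)) * (p : ZMod (p ^ 2))) = i := by
  simp

theorem natCast_val_div_mul_of_dvd [NeZero p] {x : ZMod (p ^ 2)} (h : p ∣ x.val) :
    ((x.val / p : ℕ) : ZMod (p ^ 2)) * (p : ZMod (p ^ 2)) = x := by
  rw [← Nat.cast_mul, Nat.div_mul_cancel h, ZMod.natCast_zmod_val]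

theorem primeMultiples_eq_ker [NeZero p] :
    primeMultiples p = (reduceSq p : ZMod (p ^ 2) →+ ZMod p).ker := by
  ext x
  simp only [primeMultiples, Set.mem_ofPred_eq, SetLike.mem_coe, AddMonoidHom.mem_ker,
    AddMonoidHom.coe_coe]
  constructor
  · rintro ⟨i, -, rfl⟩
    simp
  · intro hx
    have hdvd := reduceSq_eq_zero_iff.1 hx
    refine ⟨x.val / p, ?_, (natCast_val_div_mul_of_dvd hdvd).symm⟩
    exact Nat.div_lt_of_lt_mul (by simpa [sq] using x.val_lt)

theorem ncard_primeMultiples [NeZero p] : (primeMultiples p).ncard = p := by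
  have hinj : Set.InjOn (fun i : ℕ => ((i * p : ℕ) : ZMod (p ^ 2))) (Set.Iio p) := by
    intro i hi j hj hij
    have hlt : ∀ i < p, i * p < p ^ 2 := fun i hi => by
      rw [sq]; exact Nat.mul_lt_mul_of_pos_right hi (NeZero.pos p)
    have := congrArg ZMod.val hij
    simp only [ZMod.val_cast_of_lt (hlt i hi), ZMod.val_cast_of_lt (hlt j hj)] at this
    exact Nat.eq_of_mul_eq_mul_right (NeZero.pos p) this
  have himage : primeMultiples p = (fun i : ℕ => ((i * p : ℕ) : ZMod (p ^ 2))) '' Set.Iio p := by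
    ext x
    simp [primeMultiples, eq_comm]
  rw [himage, hinj.ncard_image, Set.ncard_Iio_nat]

theorem bijOn_reduceSq_setOf_add_mul [NeZero p] (α : ℕ → ℤ) :
    Set.BijOn (reduceSq p)
      {x | ∃ i < p, x = (i : ZMod (p ^ 2)) + (α i : ZMod (p ^ 2)) * (p : ZMod (p ^ 2))}
      Set.univ := by
  refine ⟨Set.mapsTo_univ _ _, ?_, fun y _ => ⟨_, ⟨y.val, y.val_lt, rfl⟩, ?_⟩⟩
  · rintro _ ⟨i, hi, rfl⟩ _ ⟨j, hj, rfl⟩ hij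
    rw [reduceSq_natCast_add_mul, reduceSq_natCast_add_mul,
      ZMod.natCast_eq_natCast_iff', Nat.mod_eq_of_lt hi, Nat.mod_eq_of_lt hj] at hij
    rw [hij]
  · rw [reduceSq_natCast_add_mul, ZMod.natCast_zmod_val]

theorem exists_eq_setOf_add_mul_of_bijOn [NeZero p] {A : Set (ZMod (p ^ 2))} (h0 : 0 ∈ A)
    (hA : Set.BijOn (reduceSq p) A Set.univ) :
    ∃ α : ℕ → ℤ, α 0 = 0 ∧
      A = {x | ∃ i < p, x = (i : ZMod (p ^ 2)) + (α i : ZMod (p ^ 2)) * (p : ZMod (p ^ 2))} := by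
  set s : ℕ → ZMod (p ^ 2) := fun i => Function.invFunOn (reduceSq p) A i
  have hs : ∀ i, s i ∈ A ∧ reduceSq p (s i) = i := fun i =>
    ⟨Function.invFunOn_mem (hA.surjOn trivial), Function.invFunOn_eq (hA.surjOn trivial)⟩
  have hs0 : s 0 = 0 := hA.injOn (hs 0).1 h0 (by rw [(hs 0).2, map_zero, Nat.cast_zero])
  -- `s i - i` lies in `pZ_{p²}`; reading `α i` off it makes `α 0 = 0` automatic, as `s 0 = 0`.
  refine ⟨fun i => ((s i - i).val / p : ℕ), by simp [hs0], ?_⟩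
  have hrep : ∀ i, s i =
      (i : ZMod (p ^ 2)) + ((((s i - i).val / p : ℕ) : ℤ) : ZMod (p ^ 2)) * p := fun i => by
    have hdvd : p ∣ (s i - i).val :=
      reduceSq_eq_zero_iff.1 (by rw [map_sub, (hs i).2, map_natCast, sub_self])
    rw [Int.cast_natCast, natCast_val_div_mul_of_dvd hdvd, add_sub_cancel]
  ext x
  constructor
  · intro hx
    refine ⟨(reduceSq p x).val, (reduceSq p x).val_lt, ?_⟩
    rw [← hrep]
    exact hA.injOn hx (hs _).1 (by rw [(hs _).2, ZMod.natCast_zmod_val])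
  · rintro ⟨i, -, rfl⟩
    rw [← hrep]
    exact (hs i).1

theorem eq_primeMultiples_of_sum_eq_zero [Fact p.Prime] {A : Finset (ZMod (p ^ 2))} {ζ : ℂ}
    (hζ : IsPrimitiveRoot ζ (p ^ 2)) (h0 : 0 ∈ A) (hcard : A.card = p)
    (hsum : ∑ a ∈ A, ζ ^ a.val = 0) :
    (A : Set (ZMod (p ^ 2))) = primeMultiples p := by
  have hsub : primeMultiples p ⊆ A := by
    rintro _ ⟨i, hi, rfl⟩
    simpa using natCast_mul_prime_pow_mem_of_sum_eq_zero (k := 1) hζ h0 hsum hi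
  exact (Set.eq_of_subset_of_ncard_le hsub (by rw [Set.ncard_coe_finset, hcard,
    ncard_primeMultiples])).symm

theorem not_subset_primeMultiples_of_closure_eq_top [Fact (1 < p)] {S : Set (ZMod (p ^ 2))}
    (hgen : AddSubgroup.closure S = ⊤) :
    ¬ S ⊆ primeMultiples p := by
  intro hS
  rw [primeMultiples_eq_ker, ← AddSubgroup.closure_le, hgen, top_le_iff] at hS
  have h1 := hS ▸ AddSubgroup.mem_top (1 : ZMod (p ^ 2))
  simp at h1

theorem ncard_eq_of_isPerfectCode [hp : Fact p.Prime] {S C : Set (ZMod (p ^ 2))}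
    (hS : S ⊂ {0}ᶜ) (hgen : AddSubgroup.closure S = ⊤) (hC : IsPerfectCode S C) :
    (insert 0 S).ncard = p ∧ C.ncard = p := by
  have hcard : (insert 0 S).ncard * C.ncard = p ^ 2 := by
    rw [IsFactorization.ncard_mul_ncard hC, Nat.card_zmod]
  obtain ⟨s, hs⟩ : S.Nonempty := Set.nonempty_iff_ne_empty.2 fun h =>
    not_subset_primeMultiples_of_closure_eq_top hgen (h ▸ Set.empty_subset _)
  have hlow : 1 < (insert 0 S).ncard := (Set.one_lt_ncard (Set.toFinite _)).2
    ⟨0, Set.mem_insert _ _, s, Set.mem_insert_of_mem _ hs, fun h => hS.1 hs h.symm⟩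
  have hup : (insert 0 S).ncard < p ^ 2 := by
    obtain ⟨x, hx0, hxS⟩ := Set.exists_of_ssubset hS
    refine (Set.ncard_lt_card fun h => ?_).trans_eq (Nat.card_zmod _)
    exact hxS (((h ▸ Set.mem_univ x) : x ∈ insert 0 S).resolve_left hx0)
  have hS₀ := hp.out.eq_of_dvd_sq (Dvd.intro _ hcard) hlow hup
  refine ⟨hS₀, ?_⟩
  rw [hS₀] at hcard
  exact Nat.eq_of_mul_eq_mul_left hp.out.pos (hcard.trans (sq p))

theorem eq_primeMultiples_of_isPerfectCode [hp : Fact p.Prime] {S C : Set (ZMod (p ^ 2))}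
    (hS : S ⊂ {0}ᶜ) (hgen : AddSubgroup.closure S = ⊤) (h0C : 0 ∈ C) (hC : IsPerfectCode S C) :
    C = primeMultiples p := by
  classical
  obtain ⟨hS₀, hCcard⟩ := ncard_eq_of_isPerfectCode hS hgen hC
  have hζ := Complex.isPrimitiveRoot_exp (p ^ 2) (NeZero.ne _)
  set ψ := AddChar.zmodChar (p ^ 2) hζ.pow_eq_one
  have hψ : ∑ g, ψ g = 0 := AddChar.sum_eq_zero_of_ne_one <|
    (AddChar.zmod_char_ne_one_iff _ ψ).2 <| by
      rw [← Nat.cast_one, AddChar.zmodChar_apply', pow_one]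
      exact hζ.ne_one (Nat.one_lt_pow two_ne_zero hp.out.one_lt)
  have hsum := (IsFactorization.sum_mul_sum hC ψ).trans hψ
  simp only [ψ, AddChar.zmodChar_apply] at hsum
  rcases mul_eq_zero.1 hsum with h | h
  · have := eq_primeMultiples_of_sum_eq_zero hζ (by simp)
      (by rwa [← Set.ncard_eq_toFinset_card']) h
    rw [Set.coe_toFinset] at this
    exact (not_subset_primeMultiples_of_closure_eq_top hgen (this ▸ Set.subset_insert 0 S)).elim
  · simpa using eq_primeMultiples_of_sum_eq_zero hζ (by simpa)
      (by rwa [← Set.ncard_eq_toFinset_card']) h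

end PrimeSquare

/-- Perfect codes in Cayley graphs of `Z_{p²}` for a prime `p`. -/
theorem perfect_code_Zp2 (p : ℕ) (hp : p.Prime)
    (S : Set (ZMod (p ^ 2)))
    (hS : S ⊂ {(0 : ZMod (p ^ 2))}ᶜ)
    (hgen : AddSubgroup.closure S = ⊤)
    (C : Set (ZMod (p ^ 2))) (h0C : (0 : ZMod (p ^ 2)) ∈ C) :
    IsPerfectCode S C ↔
      (∃ α : ℕ → ℤ, α 0 = 0 ∧
        insert 0 S = {x : ZMod (p ^ 2) |
          ∃ i < p, x = (i : ZMod (p ^ 2)) + (α i : ZMod (p ^ 2)) * (p : ZMod (p ^ 2))}) ∧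
      C = {x : ZMod (p ^ 2) | ∃ i < p, x = (i : ZMod (p ^ 2)) * (p : ZMod (p ^ 2))} := by
  have : Fact p.Prime := ⟨hp⟩
  have hsurj : Function.Surjective (reduceSq p : ZMod (p ^ 2) →+ ZMod p) :=
    ZMod.ringHom_surjective _
  change _ ↔ _ ∧ C = primeMultiples p
  constructor
  · intro hC
    have hCeq := eq_primeMultiples_of_isPerfectCode hS hgen h0C hC
    rw [IsPerfectCode, hCeq, primeMultiples_eq_ker, isFactorization_ker_iff_bijOn hsurj] at hC
    exact ⟨exists_eq_setOf_add_mul_of_bijOn (Set.mem_insert 0 S) hC, hCeq⟩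
  · rintro ⟨⟨α, -, hS₀⟩, rfl⟩
    rw [IsPerfectCode, hS₀, primeMultiples_eq_ker, isFactorization_ker_iff_bijOn hsurj]
    exact bijOn_reduceSq_setOf_add_mul α
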